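/- Let f: {-1,1}^n → {-1,1} be an arbitrary function, let g: {-1,1}^n → {-1,1} be a k-junta, and let ε > 0. Then there exists a k-junta g': {-1,1}^n → {-1,1} such that ⟨f,g'⟩ ≥ ⟨f,g⟩ − ε and, for every variable x_i relevant to g', there exists a set S ⊆ [n] with |S| ≤ k, i ∈ S, and |f̂(S)| ≥ (1 − 1/√2) · 2^{-(k-1)/2} · ε. -/
import Mathlib


noncomputable section

/-- The ±1 value of a Boolean coordinate (`true ↦ 1`, `false ↦ -1`). -/
def bval (b : Bool) : ℝ := if b then 1 else -1

/-- Flip the `i`-th coordinate of a point of the cube `{-1,1}^n`. -/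
def flipCoord {n : ℕ} (x : Fin n → Bool) (i : Fin n) : Fin n → Bool :=
  Function.update x i (!x i)

/-- Inner product `⟨f,g⟩ = 2^{-n} ∑_x f(x) g(x)`. -/
def ip {n : ℕ} (f g : (Fin n → Bool) → ℝ) : ℝ :=
  (2 ^ n : ℝ)⁻¹ * ∑ x : Fin n → Bool, f x * g x

/-- The character `χ_S(x) = ∏_{i ∈ S} x_i`. -/
def chiS {n : ℕ} (S : Finset (Fin n)) (x : Fin n → Bool) : ℝ :=
  ∏ i ∈ S, bval (x i)

/-- The Fourier coefficient `f̂(S) = ⟨f, χ_S⟩`. -/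
def fhat {n : ℕ} (f : (Fin n → Bool) → ℝ) (S : Finset (Fin n)) : ℝ :=
  ip f (chiS S)

/-- The variable `x_i` is relevant to `f`. -/
def Relevant {n : ℕ} (f : (Fin n → Bool) → ℝ) (i : Fin n) : Prop :=
  ∃ x, f (flipCoord x i) ≠ f x

/-- `f` is a `k`-junta: it has at most `k` relevant variables. -/
def IsJunta {n : ℕ} (k : ℕ) (f : (Fin n → Bool) → ℝ) : Prop :=
  {i | Relevant f i}.ncard ≤ k

/-- The subfunction of `g` obtained by fixing the `i`-th variable to `a`. -/
def subfun {n : ℕ} (g : (Fin n → Bool) → ℝ) (i : Fin n) (a : Bool) :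
    (Fin n → Bool) → ℝ :=
  fun x => g (Function.update x i a)

section aux
variable {n : ℕ}

lemma bval_sq (b : Bool) : bval b * bval b = 1 := by cases b <;> simp [bval]

lemma bval_not (b : Bool) : bval (!b) = - bval b := by cases b <;> simp [bval]

lemma flip_apply_self (x : Fin n → Bool) (i : Fin n) : flipCoord x i i = !x i := by
  simp [flipCoord]

lemma flip_apply_ne (x : Fin n → Bool) {i j : Fin n} (h : j ≠ i) : flipCoord x i j = x j := by
  simp [flipCoord, Function.update_of_ne h]

lemma flip_involutive (i : Fin n) : Function.Involutive (fun x => flipCoord x i) := by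
  intro x; funext j
  by_cases hj : j = i
  · subst hj; simp [flip_apply_self]
  · simp [flip_apply_ne _ hj]

lemma chiS_congr {S : Finset (Fin n)} {x y : Fin n → Bool} (h : ∀ i ∈ S, x i = y i) :
    chiS S x = chiS S y := Finset.prod_congr rfl (fun i hi => by rw [h i hi])

lemma chiS_flip {S : Finset (Fin n)} {i : Fin n} (hi : i ∈ S) (x : Fin n → Bool) :
    chiS S (flipCoord x i) = - chiS S x := by
  unfold chiS
  rw [← Finset.mul_prod_erase _ _ hi, ← Finset.mul_prod_erase _ (fun j => bval (x j)) hi]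
  rw [flip_apply_self, bval_not]
  rw [Finset.prod_congr rfl (fun j hj => by
    rw [flip_apply_ne x (Finset.ne_of_mem_erase hj)])]
  ring

lemma fhat_eq_zero {p : (Fin n → Bool) → ℝ} {i : Fin n}
    (h : ∀ x, p (flipCoord x i) = p x) {S : Finset (Fin n)} (hi : i ∈ S) :
    fhat p S = 0 := by
  have key : ∑ x : Fin n → Bool, p x * chiS S x = 0 := by
    have h1 : ∑ x : Fin n → Bool, p x * chiS S x
        = ∑ x : Fin n → Bool, p (flipCoord x i) * chiS S (flipCoord x i) := by
      have := (Equiv.sum_comp (flip_involutive (n := n) i).toPerm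
        (fun x => p x * chiS S x)).symm
      simpa only [Function.Involutive.coe_toPerm] using this
    have h2 : ∑ x : Fin n → Bool, p (flipCoord x i) * chiS S (flipCoord x i)
        = - ∑ x : Fin n → Bool, p x * chiS S x := by
      rw [← Finset.sum_neg_distrib]
      refine Finset.sum_congr rfl (fun x _ => ?_)
      rw [h x, chiS_flip hi]; ring
    linarith [h1, h2]
  simp [fhat, ip, chiS] at key ⊢
  tauto

lemma sum_chiS_mul (x y : Fin n → Bool) :
    ∑ S : Finset (Fin n), chiS S x * chiS S y = if x = y then (2:ℝ)^n else 0 := by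
  have h1 : ∀ S : Finset (Fin n), chiS S x * chiS S y
      = ∏ i ∈ S, (bval (x i) * bval (y i)) := by
    intro S; simp [chiS, Finset.prod_mul_distrib]
  rw [Finset.sum_congr rfl (fun S _ => h1 S)]
  have h2 : ∑ S : Finset (Fin n), ∏ i ∈ S, (bval (x i) * bval (y i))
      = ∏ i : Fin n, (bval (x i) * bval (y i) + 1) := by
    rw [Finset.prod_add]
    rw [Finset.powerset_univ]
    simp
  rw [h2]
  by_cases hxy : x = y
  · subst hxy
    simp [bval_sq]
    norm_num
  · simp only [if_neg hxy]
    obtain ⟨i, hi⟩ : ∃ i, x i ≠ y i := by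
      by_contra hc; push_neg at hc; exact hxy (funext hc)
    refine Finset.prod_eq_zero (Finset.mem_univ i) ?_
    revert hi; cases x i <;> cases y i <;> simp [bval]

lemma plancherel (p q : (Fin n → Bool) → ℝ) :
    ip p q = ∑ S : Finset (Fin n), fhat p S * fhat q S := by
  have h1 : ∀ S : Finset (Fin n), fhat p S * fhat q S
      = (2^n:ℝ)⁻¹ * (2^n:ℝ)⁻¹ *
        ∑ x : Fin n → Bool, ∑ y : Fin n → Bool, p x * q y * (chiS S x * chiS S y) := by
    intro S
    simp only [fhat, ip]
    rw [mul_mul_mul_comm, Finset.sum_mul_sum]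
    congr 1
    refine Finset.sum_congr rfl (fun x _ => Finset.sum_congr rfl (fun y _ => by ring))
  rw [Finset.sum_congr rfl (fun S _ => h1 S), ← Finset.mul_sum]
  rw [Finset.sum_comm]
  have h3 : ∀ x : Fin n → Bool,
      ∑ S : Finset (Fin n), ∑ y : Fin n → Bool, p x * q y * (chiS S x * chiS S y)
      = p x * q x * (2:ℝ)^n := by
    intro x
    rw [Finset.sum_comm]
    have h4 : ∀ y : Fin n → Bool,
        ∑ S : Finset (Fin n), p x * q y * (chiS S x * chiS S y)
        = p x * q y * (if x = y then (2:ℝ)^n else 0) := by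
      intro y; rw [← Finset.mul_sum, sum_chiS_mul]
    rw [Finset.sum_congr rfl (fun y _ => h4 y)]
    simp [Finset.sum_ite_eq]
  rw [Finset.sum_congr rfl (fun x _ => h3 x)]
  have hcard : (2:ℝ)^n ≠ 0 := by positivity
  unfold ip
  rw [← Finset.sum_mul]
  field_simp

lemma parseval {g : (Fin n → Bool) → ℝ} (hg : ∀ x, g x = 1 ∨ g x = -1) :
    ∑ S : Finset (Fin n), fhat g S * fhat g S = 1 := by
  rw [← plancherel]
  have : ∀ x : Fin n → Bool, g x * g x = 1 := by
    intro x; rcases hg x with h | h <;> rw [h] <;> norm_num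
  simp only [ip, this]
  rw [Finset.sum_const]
  simp [Fintype.card_fun]

end aux

set_option maxHeartbeats 1000000 in
/-- Main technical lemma: for arbitrary `±1`-valued `f`, a `±1`-valued
`k`-junta `g`, and `ε > 0`, there is a `±1`-valued `k`-junta `g'` with
`⟨f,g'⟩ ≥ ⟨f,g⟩ - ε` such that every variable relevant to `g'` lies in some set `S` of size
at most `k` with `|f̂(S)| ≥ (1 - 1/√2) · 2^{-(k-1)/2} · ε`. -/
theorem stmt0 {n k : ℕ} (f g : (Fin n → Bool) → ℝ)
    (hf : ∀ x, f x = 1 ∨ f x = -1) (hg : ∀ x, g x = 1 ∨ g x = -1)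
    (hgk : IsJunta k g) (ε : ℝ) (hε : 0 < ε) :
    ∃ g' : (Fin n → Bool) → ℝ, (∀ x, g' x = 1 ∨ g' x = -1) ∧ IsJunta k g' ∧
      ip f g' ≥ ip f g - ε ∧
      ∀ i : Fin n, Relevant g' i →
        ∃ S : Finset (Fin n), S.card ≤ k ∧ i ∈ S ∧
          |fhat f S| ≥ (1 - 1 / Real.sqrt 2) * (2 : ℝ) ^ (-((k : ℝ) - 1) / 2) * ε := by
  classical
  set δ : ℝ := (1 - 1 / Real.sqrt 2) * (2 : ℝ) ^ (-((k : ℝ) - 1) / 2) * ε with hδdef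
  have hsqrt2 : (1:ℝ) < Real.sqrt 2 := by
    have h2 : Real.sqrt 2 ^ 2 = 2 := Real.sq_sqrt (by norm_num)
    nlinarith [Real.sqrt_nonneg 2]
  have hδpos : 0 < δ := by
    have h1 : (0:ℝ) < 1 - 1 / Real.sqrt 2 := by
      have : 1 / Real.sqrt 2 < 1 := by
        rw [div_lt_one (by linarith)]; exact hsqrt2
      linarith
    have h2 : (0:ℝ) < (2:ℝ) ^ (-((k : ℝ) - 1) / 2) := Real.rpow_pos_of_pos (by norm_num) _
    rw [hδdef]
    exact mul_pos (mul_pos h1 h2) hε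
  set J : Finset (Fin n) := Finset.univ.filter (fun i => Relevant g i) with hJdef
  have hJcard : J.card ≤ k := by
    have h1 : {i | Relevant g i} = ↑J := by ext i; simp [hJdef]
    have h2 := hgk
    rwa [IsJunta, h1, Set.ncard_coe_finset] at h2
  set Good : Fin n → Prop :=
    fun i => ∃ S : Finset (Fin n), S.card ≤ k ∧ i ∈ S ∧ |fhat f S| ≥ δ with hGooddef
  set B : Finset (Fin n) := J.filter (fun i => ¬ Good i) with hBdef
  set ov : (Fin n → Bool) → (Fin n → Bool) → (Fin n → Bool) :=
    fun x b i => if i ∈ B then b i else x i with hovdef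
  have hcard2 : ((2:ℝ)^n) ≠ 0 := by positivity
  have hovB : ∀ (x b : Fin n → Bool) (i : Fin n), i ∈ B → ov (flipCoord x i) b = ov x b := by
    intro x b i hi; funext j
    by_cases hj : j ∈ B
    · simp [hovdef, hj]
    · have hji : j ≠ i := fun h => hj (h ▸ hi)
      simp [hovdef, hj, flip_apply_ne x hji]
  have hovNB : ∀ (x b : Fin n → Bool) (i : Fin n), i ∉ B →
      ov (flipCoord x i) b = flipCoord (ov x b) i := by
    intro x b i hi; funext j
    by_cases hj : j = i
    · subst hj; simp [hovdef, hi, flip_apply_self]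
    · by_cases hjB : j ∈ B <;> simp [hovdef, hjB, flip_apply_ne _ hj]
  have hsum : ∀ G : (Fin n → Bool) → ℝ,
      ∑ x : Fin n → Bool, ∑ b : Fin n → Bool, G (ov x b)
        = (2:ℝ)^n * ∑ x : Fin n → Bool, G x := by
    intro G
    have hinv : Function.Involutive
        (fun p : (Fin n → Bool) × (Fin n → Bool) => (ov p.1 p.2, ov p.2 p.1)) := by
      intro p
      simp only
      ext j
      · by_cases hj : j ∈ B <;> simp [hovdef, hj]
      · by_cases hj : j ∈ B <;> simp [hovdef, hj]
    have h1 : ∑ p : (Fin n → Bool) × (Fin n → Bool), G (ov p.1 p.2)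
        = ∑ p : (Fin n → Bool) × (Fin n → Bool), G p.1 := by
      have := Equiv.sum_comp hinv.toPerm
        (fun p : (Fin n → Bool) × (Fin n → Bool) => G p.1)
      simpa only [Function.Involutive.coe_toPerm] using this
    calc ∑ x : Fin n → Bool, ∑ b : Fin n → Bool, G (ov x b)
        = ∑ p : (Fin n → Bool) × (Fin n → Bool), G (ov p.1 p.2) :=
          (Fintype.sum_prod_type (f := fun p : (Fin n → Bool) × (Fin n → Bool) =>
            G (ov p.1 p.2))).symm
      _ = ∑ p : (Fin n → Bool) × (Fin n → Bool), G p.1 := h1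
      _ = ∑ x : Fin n → Bool, ∑ _b : Fin n → Bool, G x :=
          Fintype.sum_prod_type (f := fun p : (Fin n → Bool) × (Fin n → Bool) => G p.1)
      _ = (2:ℝ)^n * ∑ x : Fin n → Bool, G x := by
          have hc : ((Fintype.card (Fin n → Bool) : ℕ) : ℝ) = (2:ℝ)^n := by
            simp [Fintype.card_fun]
          simp only [Finset.sum_const, Finset.card_univ, nsmul_eq_mul, hc, ← Finset.mul_sum]
  -- the averaged function
  set h : (Fin n → Bool) → ℝ :=
    fun x => (2^n : ℝ)⁻¹ * ∑ b : Fin n → Bool, g (ov x b) with hhdef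
  have hhflip : ∀ (i : Fin n), i ∈ B → ∀ x, h (flipCoord x i) = h x := by
    intro i hi x
    simp only [hhdef]
    congr 1
    exact Finset.sum_congr rfl (fun b _ => by rw [hovB x b i hi])
  have hhatB : ∀ S : Finset (Fin n), (S ∩ B).Nonempty → fhat h S = 0 := by
    rintro S ⟨i, hiS⟩
    rw [Finset.mem_inter] at hiS
    exact fhat_eq_zero (hhflip i hiS.2) hiS.1
  have hhatNB : ∀ S : Finset (Fin n), S ∩ B = ∅ → fhat h S = fhat g S := by
    intro S hSB
    have hchi : ∀ x b : Fin n → Bool, chiS S (ov x b) = chiS S x := by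
      intro x b
      refine chiS_congr (fun i hi => ?_)
      have hiB : i ∉ B := fun hB =>
        (Finset.eq_empty_iff_forall_notMem.mp hSB i (Finset.mem_inter.mpr ⟨hi, hB⟩))
      simp [hovdef, hiB]
    unfold fhat ip
    congr 1
    have e2 : ∑ x : Fin n → Bool, h x * chiS S x
        = (2^n:ℝ)⁻¹ * ∑ x : Fin n → Bool, ∑ b : Fin n → Bool,
            g (ov x b) * chiS S (ov x b) := by
      rw [Finset.mul_sum]
      refine Finset.sum_congr rfl (fun x _ => ?_)
      simp only [hhdef]
      rw [mul_assoc, Finset.sum_mul]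
      congr 1
      exact Finset.sum_congr rfl (fun b _ => by rw [hchi x b])
    have e3 := hsum (fun y => g y * chiS S y)
    rw [e2, e3, ← mul_assoc, inv_mul_cancel₀ hcard2, one_mul]
  -- choose a good restriction
  have key : ∑ b : Fin n → Bool, ip f (fun x => g (ov x b)) = (2:ℝ)^n * ip f h := by
    have e1 : ∀ x : Fin n → Bool,
        f x * h x = (2^n:ℝ)⁻¹ * ∑ b : Fin n → Bool, f x * g (ov x b) := by
      intro x; simp only [hhdef]; rw [mul_left_comm, Finset.mul_sum]
    calc ∑ b : Fin n → Bool, ip f (fun x => g (ov x b))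
        = (2^n:ℝ)⁻¹ * ∑ b : Fin n → Bool, ∑ x : Fin n → Bool, f x * g (ov x b) := by
          simp only [ip]; exact (Finset.mul_sum _ _ _).symm
      _ = (2^n:ℝ)⁻¹ * ∑ x : Fin n → Bool, ∑ b : Fin n → Bool, f x * g (ov x b) := by
          rw [Finset.sum_comm]
      _ = ∑ x : Fin n → Bool, f x * h x := by
          rw [Finset.mul_sum]
          exact Finset.sum_congr rfl (fun x _ => (e1 x).symm)
      _ = (2:ℝ)^n * ip f h := by
          unfold ip; rw [← mul_assoc, mul_inv_cancel₀ hcard2, one_mul]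
  obtain ⟨bstar, _, hbstar⟩ : ∃ b ∈ (Finset.univ : Finset (Fin n → Bool)),
      ip f h ≤ ip f (fun x => g (ov x b)) := by
    apply Finset.exists_le_of_sum_le Finset.univ_nonempty
    rw [key]
    rw [Finset.sum_const, Finset.card_univ, nsmul_eq_mul]
    have hc : ((Fintype.card (Fin n → Bool) : ℕ) : ℝ) = (2:ℝ)^n := by
      simp [Fintype.card_fun]
    rw [hc]
  -- loss bound
  set T : Finset (Finset (Fin n)) :=
    Finset.univ.filter (fun S : Finset (Fin n) => S ⊆ J ∧ (S ∩ B).Nonempty) with hTdef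
  have hT : ip f g - ip f h = ∑ S ∈ T, fhat f S * fhat g S := by
    rw [plancherel f g, plancherel f h, ← Finset.sum_sub_distrib]
    have hvan : ∀ S ∈ (Finset.univ : Finset (Finset (Fin n))), S ∉ T →
        fhat f S * fhat g S - fhat f S * fhat h S = 0 := by
      intro S _ hST
      have hST' : ¬(S ⊆ J ∧ (S ∩ B).Nonempty) := fun hc =>
        hST (Finset.mem_filter.mpr ⟨Finset.mem_univ S, hc⟩)
      by_cases hSB : (S ∩ B).Nonempty
      · have hSJ : ¬ S ⊆ J := fun hc => hST' ⟨hc, hSB⟩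
        obtain ⟨i, hiS, hiJ⟩ := Finset.not_subset.mp hSJ
        have hrel : ∀ x, g (flipCoord x i) = g x := by
          have h5 : ¬ Relevant g i := by
            rw [hJdef] at hiJ; simpa using hiJ
          unfold Relevant at h5; push_neg at h5; exact h5
        rw [fhat_eq_zero hrel hiS, hhatB S hSB]; ring
      · rw [hhatNB S (Finset.not_nonempty_iff_eq_empty.mp hSB)]; ring
    rw [← Finset.sum_subset (Finset.subset_univ T) hvan]
    refine Finset.sum_congr rfl (fun S hS => ?_)
    rw [Finset.mem_filter] at hS
    rw [hhatB S hS.2.2]; ring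
  have hfT : ∀ S ∈ T, |fhat f S| ≤ δ := by
    intro S hS
    rw [hTdef, Finset.mem_filter] at hS
    obtain ⟨hSJ, i, hiSB⟩ := hS.2
    rw [Finset.mem_inter] at hiSB
    have hiB := hiSB.2
    rw [hBdef, Finset.mem_filter] at hiB
    by_contra hcon; push_neg at hcon
    exact hiB.2 ⟨S, le_trans (Finset.card_le_card hSJ) hJcard, hiSB.1, le_of_lt hcon⟩
  have hTcard : (T.card : ℝ) ≤ (2:ℝ)^k := by
    have h1 : T ⊆ J.powerset := by
      intro S hS; rw [hTdef, Finset.mem_filter] at hS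
      exact Finset.mem_powerset.mpr hS.2.1
    have h2 : T.card ≤ 2^J.card := by
      simpa [Finset.card_powerset] using Finset.card_le_card h1
    calc (T.card:ℝ) ≤ ((2^J.card : ℕ) : ℝ) := by exact_mod_cast h2
      _ ≤ (2:ℝ)^k := by
          push_cast
          exact pow_le_pow_right₀ (by norm_num) hJcard
  have hsumsq : ∑ S ∈ T, |fhat g S|^2 ≤ 1 := by
    have h1 : ∑ S ∈ T, |fhat g S|^2 ≤ ∑ S : Finset (Fin n), |fhat g S|^2 :=
      Finset.sum_le_sum_of_subset_of_nonneg (Finset.subset_univ T)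
        (fun S _ _ => sq_nonneg _)
    have h2 : ∑ S : Finset (Fin n), |fhat g S|^2 = 1 := by
      rw [← parseval hg]
      exact Finset.sum_congr rfl (fun S _ => by rw [sq_abs]; ring)
    linarith
  have hCS : ∑ S ∈ T, |fhat g S| ≤ Real.sqrt ((2:ℝ)^k) := by
    have h1 : (∑ S ∈ T, |fhat g S|)^2 ≤ (T.card : ℝ) * ∑ S ∈ T, |fhat g S|^2 :=
      sq_sum_le_card_mul_sum_sq
    have h2 : (∑ S ∈ T, |fhat g S|)^2 ≤ (2:ℝ)^k := by
      calc (∑ S ∈ T, |fhat g S|)^2 ≤ (T.card : ℝ) * ∑ S ∈ T, |fhat g S|^2 := h1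
        _ ≤ (2:ℝ)^k * 1 := by
            apply mul_le_mul hTcard hsumsq
            · exact Finset.sum_nonneg (fun S _ => sq_nonneg _)
            · positivity
        _ = (2:ℝ)^k := mul_one _
    have h3 := Real.sqrt_le_sqrt h2
    rwa [Real.sqrt_sq (Finset.sum_nonneg (fun S _ => abs_nonneg _))] at h3
  have hloss : |ip f g - ip f h| ≤ δ * Real.sqrt ((2:ℝ)^k) := by
    rw [hT]
    calc |∑ S ∈ T, fhat f S * fhat g S| ≤ ∑ S ∈ T, |fhat f S * fhat g S| :=
          Finset.abs_sum_le_sum_abs _ _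
      _ ≤ ∑ S ∈ T, δ * |fhat g S| := by
          refine Finset.sum_le_sum (fun S hS => ?_)
          rw [abs_mul]
          exact mul_le_mul_of_nonneg_right (hfT S hS) (abs_nonneg _)
      _ = δ * ∑ S ∈ T, |fhat g S| := (Finset.mul_sum _ _ _).symm
      _ ≤ δ * Real.sqrt ((2:ℝ)^k) := mul_le_mul_of_nonneg_left hCS (le_of_lt hδpos)
  have hconst : δ * Real.sqrt ((2:ℝ)^k) ≤ ε := by
    have hs0 : Real.sqrt 2 ≠ 0 := by linarith
    have hs : Real.sqrt ((2:ℝ)^k) = (2:ℝ) ^ ((k:ℝ)/2) := by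
      rw [Real.sqrt_eq_rpow, ← Real.rpow_natCast 2 k, ← Real.rpow_mul (by norm_num)]
      ring_nf
    have hr : (2:ℝ) ^ (-((k:ℝ)-1)/2) * (2:ℝ)^((k:ℝ)/2) = Real.sqrt 2 := by
      rw [← Real.rpow_add (by norm_num)]
      rw [show -((k:ℝ)-1)/2 + (k:ℝ)/2 = 1/2 by ring]
      rw [← Real.sqrt_eq_rpow]
    rw [hδdef, hs]
    have hq : (1 - 1/Real.sqrt 2) * Real.sqrt 2 = Real.sqrt 2 - 1 := by
      field_simp
    calc (1 - 1/Real.sqrt 2) * (2:ℝ)^(-((k:ℝ)-1)/2) * ε * (2:ℝ)^((k:ℝ)/2)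
        = ((1 - 1/Real.sqrt 2) * Real.sqrt 2) * ε := by rw [← hr]; ring
      _ = (Real.sqrt 2 - 1) * ε := by rw [hq]
      _ ≤ 1 * ε := by
          have hle : Real.sqrt 2 ≤ 2 := by
            nlinarith [Real.sq_sqrt (show (0:ℝ) ≤ 2 by norm_num), Real.sqrt_nonneg 2]
          nlinarith
      _ = ε := one_mul ε
  -- conclude
  refine ⟨fun x => g (ov x bstar), fun x => hg _, ?_, ?_, ?_⟩
  · have hsub : {i | Relevant (fun x => g (ov x bstar)) i} ⊆ {i | Relevant g i} := by
      intro i hi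
      by_contra hrel
      have hgx : ∀ x, g (flipCoord x i) = g x := by
        have h5 : ¬ Relevant g i := hrel
        unfold Relevant at h5; push_neg at h5; exact h5
      obtain ⟨x, hx⟩ := hi
      apply hx
      show g (ov (flipCoord x i) bstar) = g (ov x bstar)
      by_cases hiB : i ∈ B
      · rw [hovB x bstar i hiB]
      · rw [hovNB x bstar i hiB, hgx]
    exact le_trans (Set.ncard_le_ncard hsub (Set.toFinite _)) hgk
  · have h1 : ip f g - ip f h ≤ δ * Real.sqrt ((2:ℝ)^k) :=
      le_trans (le_abs_self _) hloss
    have h2 := hbstar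
    show ip f (fun x => g (ov x bstar)) ≥ ip f g - ε
    linarith
  · intro i hi
    have hiB : i ∉ B := by
      intro hiB
      obtain ⟨x, hx⟩ := hi
      exact hx (show g (ov (flipCoord x i) bstar) = g (ov x bstar) by
        rw [hovB x bstar i hiB])
    have hiJ : i ∈ J := by
      rw [hJdef, Finset.mem_filter]
      refine ⟨Finset.mem_univ i, ?_⟩
      obtain ⟨x, hx⟩ := hi
      have hx' : g (ov (flipCoord x i) bstar) ≠ g (ov x bstar) := hx
      rw [hovNB x bstar i hiB] at hx'
      exact ⟨ov x bstar, hx'⟩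
    have hGi : Good i := by
      by_contra hng
      exact hiB (by rw [hBdef, Finset.mem_filter]; exact ⟨hiJ, hng⟩)
    obtain ⟨S, h1, h2, h3⟩ := hGi
    exact ⟨S, h1, h2, h3⟩
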